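/- Let G=(V,E) be a simple graph, let V = A ∪ B be a partition of the vertex set, and suppose the edge cut E(A,B) consists of exactly n edges e_1 = a_1b_1, …, e_n = a_nb_n with a_i ∈ A and b_i ∈ B. Let x_i be an interior point of the closed edge ē_i in |G| for each i. Then every arc in |G| that contains x_1, …, x_n and has endpoints x_1 and x_n satisfies: if n is even, it contains both segments [a_1,x_1] and [a_n,x_n], or both segments [x_1,b_1] and [x_n,b_n]; if n is odd, it contains [a_1,x_1] and [x_n,b_n], or it contains [x_1,b_1] and [a_n,x_n]. -/

import Mathlib

/-
Points of `|G|` are probability vectors on `V`, and their mass on `B` is a continuous height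
`|G| → [0,1]` which is `0` on `A`, `1` on `B`, and equal to the edge parameter on the cut edges.
So along the arc the height lies in `(0,1)` exactly while the arc runs inside a cut edge, and
there it is injective. Order the visits of the points `xᵢ` along the arc. Between two consecutive
visits the arc meets no other `xⱼ`, hence traverses no cut edge completely, so it leaves one edge
and enters the next through the same side of the cut. Inside an edge it leaves through the other
end than it entered. So the side alternates over the `n - 1` gaps: the arc leaves `e₁` from `x₁`
and enters `eₙ` towards `xₙ` on the same side of the cut iff `n` is even.
-/

open Topology

noncomputable section

variable {V : Type*}

open Classical in
/-- The Dirac function marking a vertex: the point of `|G|` corresponding to vertex `v`. -/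
noncomputable def vertexPoint (v : V) : V → ℝ := fun u => if u = v then 1 else 0

open Classical in
/-- The point of `|G|` lying on the edge `vw` at parameter `t` (measured from `v` towards `w`). -/
noncomputable def edgePoint (v w : V) (t : ℝ) : V → ℝ :=
  fun u => (if u = v then 1 - t else 0) + (if u = w then t else 0)

/-- The geometric realization `|G|` of a simple graph `G`, realized as the set of
formal convex combinations of adjacent pairs of vertices; each closed edge carries
its usual topology as a copy of `[0,1]`. -/
def GraphRealization (G : SimpleGraph V) : Set (V → ℝ) :=
  {x | (∃ v, x = vertexPoint v) ∨
    ∃ v w t, G.Adj v w ∧ t ∈ Set.Icc (0 : ℝ) 1 ∧ x = edgePoint v w t}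

/-- A subset of a topological space is an arc if it is homeomorphic to `[0,1]`. -/
def IsArc {X : Type*} [TopologicalSpace X] (A : Set X) : Prop :=
  Nonempty (↥A ≃ₜ ↥unitInterval)

/-- A space is `n`-arc connected if any at most `n` points lie on a common arc. -/
def NArcConn (X : Type*) [TopologicalSpace X] (n : ℕ) : Prop :=
  ∀ S : Finset X, S.card ≤ n → ∃ A : Set X, IsArc A ∧ ↑S ⊆ A

/-- The unit circle in the plane. -/
def unitCircleSet : Set (ℝ × ℝ) := {p | p.1 ^ 2 + p.2 ^ 2 = 1}

/-- A subset of a topological space is a simple closed curve if homeomorphic to the circle. -/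
def IsSimpleClosedCurve {X : Type*} [TopologicalSpace X] (C : Set X) : Prop :=
  Nonempty (↥C ≃ₜ ↥unitCircleSet)

/-- A space is `n`-circle connected if any at most `n` points lie on a common
simple closed curve. -/
def NCircleConn (X : Type*) [TopologicalSpace X] (n : ℕ) : Prop :=
  ∀ S : Finset X, S.card ≤ n → ∃ C : Set X, IsSimpleClosedCurve C ∧ ↑S ⊆ C

/-- A space is `n`-strongly arc connected if any list of at most `n` points is contained
in an arc, the points appearing along the arc in the listed order. -/
def NStrongArcConn (X : Type*) [TopologicalSpace X] (n : ℕ) : Prop :=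
  ∀ l : List X, l.length ≤ n →
    ∃ f : ↥unitInterval → X, Topology.IsEmbedding f ∧
      ∃ t : Fin l.length → ↥unitInterval, Monotone t ∧ ∀ i, f (t i) = l.get i

/-- A graph is `k`-connected if removing fewer than `k` vertices leaves it connected. -/
def KConnected (G : SimpleGraph V) (k : ℕ) : Prop :=
  ∀ S : Set V, S.encard < (k : ℕ∞) → (G.induce (Sᶜ : Set V)).Connected

/-- A graph is cyclically connected if any two vertices lie on a common cycle. -/
def CyclicallyConnected (G : SimpleGraph V) : Prop :=
  ∀ v w : V, ∃ (u : V) (c : G.Walk u u), c.IsCycle ∧ v ∈ c.support ∧ w ∈ c.support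

/-- The circle of radius `r` centered at `c` in the plane. -/
def circleAt (c : ℝ × ℝ) (r : ℝ) : Set (ℝ × ℝ) :=
  {p | (p.1 - c.1) ^ 2 + (p.2 - c.2) ^ 2 = r ^ 2}

/-- The horizontal segment at height `y` from abscissa `a` to `b`. -/
def hSeg (y a b : ℝ) : Set (ℝ × ℝ) := {p | p.2 = y ∧ a ≤ p.1 ∧ p.1 ≤ b}

/-- The θ-curve: unit circle together with horizontal diameter. -/
def thetaSet : Set (ℝ × ℝ) := circleAt (0, 0) 1 ∪ hSeg 0 (-1) 1

/-- Figure-eight: two unit circles meeting at the origin. -/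
def figureEightSet : Set (ℝ × ℝ) := circleAt (-1, 0) 1 ∪ circleAt (1, 0) 1

/-- Lollipop: unit circle with the segment from `(1,0)` to `(2,0)` attached. -/
def lollipopSet : Set (ℝ × ℝ) := circleAt (0, 0) 1 ∪ hSeg 0 1 2

/-- Lollipop with its free endpoint removed. -/
def openLollipopSet : Set (ℝ × ℝ) := lollipopSet \ {(2, 0)}

/-- Dumbbell: two disjoint unit circles joined by a segment. -/
def dumbbellSet : Set (ℝ × ℝ) := circleAt (-2, 0) 1 ∪ circleAt (2, 0) 1 ∪ hSeg 0 (-1) 1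

/-- Happy-face curve: two circles meeting at a point, joined by a further arc. -/
def happyFaceSet : Set (ℝ × ℝ) :=
  circleAt (-1, 0) 1 ∪ circleAt (1, 0) 1 ∪ {p | p.1 ^ 2 + p.2 ^ 2 = 4 ∧ p.2 ≤ 0}

/-- Baguette curve: two disjoint circles joined by two disjoint arcs. -/
def baguetteSet : Set (ℝ × ℝ) :=
  circleAt (-3, 0) 1 ∪ circleAt (3, 0) 1 ∪ hSeg 0 (-2) 2 ∪ hSeg 1 (-3) 3

/-- A graph is a basic 4-ac graph iff its realization is homeomorphic to a circle,
a θ-curve, a happy-face curve or a baguette curve (this captures precisely the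
subdivisions of those four graphs). -/
def IsBasicFourAC {W : Type*} (H : SimpleGraph W) : Prop :=
  Nonempty (↥(GraphRealization H) ≃ₜ ↥unitCircleSet) ∨
  Nonempty (↥(GraphRealization H) ≃ₜ ↥thetaSet) ∨
  Nonempty (↥(GraphRealization H) ≃ₜ ↥happyFaceSet) ∨
  Nonempty (↥(GraphRealization H) ≃ₜ ↥baguetteSet)

/-- A chain-graph decomposition of the connected graph `G`: links indexed by an
interval `J` of `ℤ`, non-consecutive links are disjoint, consecutive links share
exactly one vertex. -/
structure IsChainGraph (G : SimpleGraph V) (J : Set ℤ) (L : ℤ → G.Subgraph) : Prop where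
  connected : G.Connected
  ordConnected : J.OrdConnected
  nonempty : J.Nonempty
  cover : (⨆ i ∈ J, L i) = (⊤ : G.Subgraph)
  sep : ∀ i ∈ J, ∀ j ∈ J, i + 1 < j → (L i).verts ∩ (L j).verts = ∅
  link : ∀ i ∈ J, i + 1 ∈ J → ∃ v, (L i).verts ∩ (L (i + 1)).verts = {v}

/-- A cut-vertex: a vertex whose removal disconnects the graph. -/
def IsCutVertex (G : SimpleGraph V) (v : V) : Prop :=
  ¬ (G.induce ({v}ᶜ : Set V)).Connected

/-- A block: a maximal 2-connected subgraph. -/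
def IsBlock (G : SimpleGraph V) (H : G.Subgraph) : Prop :=
  KConnected H.coe 2 ∧ ∀ H' : G.Subgraph, H ≤ H' → KConnected H'.coe 2 → H' = H

/-- The block graph of `G`: the bipartite graph on cut-vertices and blocks, a cut-vertex
being adjacent to the blocks containing it. -/
def BlockGraph (G : SimpleGraph V) :
    SimpleGraph ({v : V // IsCutVertex G v} ⊕ {H : G.Subgraph // IsBlock G H}) :=
  SimpleGraph.fromRel fun a b =>
    ∃ (c : {v : V // IsCutVertex G v}) (B : {H : G.Subgraph // IsBlock G H}),
      a = Sum.inl c ∧ b = Sum.inr B ∧ (c : V) ∈ (B : G.Subgraph).verts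

/-- An `A`–`B` path: a path starting in `A`, ending in `B` and meeting `A ∪ B` only
in these two endvertices. -/
structure ABPath (G : SimpleGraph V) (A B : Set V) where
  first : V
  last : V
  walk : G.Walk first last
  isPath : walk.IsPath
  firstA : first ∈ A
  lastB : last ∈ B
  meetA : ∀ v ∈ walk.support, v ∈ A → v = first
  meetB : ∀ v ∈ walk.support, v ∈ B → v = last

/-- A family of pairwise vertex-disjoint paths. -/
def PathFamilyDisjoint {G : SimpleGraph V} {A B : Set V} {k : ℕ}
    (P : Fin k → ABPath G A B) : Prop :=
  ∀ i j, i ≠ j → ∀ v, v ∈ (P i).walk.support → v ∉ (P j).walk.support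

/-- The set of vertices used by a family of paths. -/
def familySupport {G : SimpleGraph V} {A B : Set V} {k : ℕ}
    (P : Fin k → ABPath G A B) : Set V :=
  {v | ∃ i, v ∈ (P i).walk.support}

/-- The set of edges used by a family of paths. -/
def familyEdges {G : SimpleGraph V} {A B : Set V} {k : ℕ}
    (P : Fin k → ABPath G A B) : Set (Sym2 V) :=
  {e | ∃ i, e ∈ (P i).walk.edges}

/-- A walk `W` (with no repeated edges) is alternating with respect to the disjoint
path family `P`: it starts in `A` off the paths; repeated vertices lie on paths of the
family; upon hitting a path by a new edge it follows that path backwards for at least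
one edge; and it traverses edges of paths of the family only backwards. -/
structure IsAlternatingWalk {G : SimpleGraph V} {A B : Set V} {k : ℕ}
    (P : Fin k → ABPath G A B) {x y : V} (W : G.Walk x y) : Prop where
  trail : W.IsTrail
  startA : x ∈ A
  startOff : x ∉ familySupport P
  repeats : ∀ v, List.Duplicate v W.support → v ∈ familySupport P
  follows : ∀ (i : ℕ) (hi : i < W.darts.length) (j : Fin k),
      (W.darts.get ⟨i, hi⟩).snd ∈ (P j).walk.support →
      (W.darts.get ⟨i, hi⟩).edge ∉ (P j).walk.edges →
      ∃ h : i + 1 < W.darts.length, (W.darts.get ⟨i + 1, h⟩).symm ∈ (P j).walk.darts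
  backward : ∀ d ∈ W.darts, ∀ j : Fin k,
      d.edge ∈ (P j).walk.edges → d.symm ∈ (P j).walk.darts

end

/-- The arc parametrized by `f` contains the segment of the edge `vw` between
parameters `r₀` and `r₁`. -/
def ArcContainsSeg {V : Type*} {G : SimpleGraph V}
    (f : ↥unitInterval → ↥(GraphRealization G)) (v w : V) (r₀ r₁ : ℝ) : Prop :=
  ∀ r ∈ Set.Icc r₀ r₁, ∃ s, (f s : V → ℝ) = edgePoint v w r

open Set Function

theorem exists_first_mem_of_isClosed {T : Set ℝ} (hT : IsClosed T) {u s : ℝ} (hu : u ∉ T)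
    (hs : s ∈ T) (hus : u ≤ s) : ∃ d ∈ T, u < d ∧ d ≤ s ∧ ∀ r ∈ Ico u d, r ∉ T := by
  have hne : (T ∩ Icc u s).Nonempty := ⟨s, hs, hus, le_rfl⟩
  have hbdd : BddBelow (T ∩ Icc u s) := ⟨u, fun r hr => hr.2.1⟩
  obtain ⟨hdT, hud, hds⟩ := (hT.inter isClosed_Icc).csInf_mem hne hbdd
  refine ⟨_, hdT, hud.lt_of_ne (ne_of_mem_of_not_mem hdT hu).symm, hds, fun r hr hrT => ?_⟩
  exact (csInf_le hbdd ⟨hrT, hr.1, hr.2.le.trans hds⟩).not_gt hr.2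

theorem exists_last_mem_of_isClosed {T : Set ℝ} (hT : IsClosed T) {v s : ℝ} (hv : v ∉ T)
    (hs : s ∈ T) (hsv : s ≤ v) : ∃ c ∈ T, s ≤ c ∧ c < v ∧ ∀ r ∈ Ioc c v, r ∉ T := by
  have hne : (T ∩ Icc s v).Nonempty := ⟨s, hs, le_rfl, hsv⟩
  have hbdd : BddAbove (T ∩ Icc s v) := ⟨v, fun r hr => hr.2.2⟩
  obtain ⟨hcT, hsc, hcv⟩ := (hT.inter isClosed_Icc).csSup_mem hne hbdd
  refine ⟨_, hcT, hsc, hcv.lt_of_ne (ne_of_mem_of_not_mem hcT hv), fun r hr hrT => ?_⟩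
  exact (le_csSup hbdd ⟨hrT, hsc.trans hr.1.le, hr.2⟩).not_gt hr.1

theorem uIcc_eq_Icc_of_mem_pair {x y : ℝ} (hx : x ∈ ({0, 1} : Set ℝ))
    (hy : y ∈ ({0, 1} : Set ℝ)) (hxy : x ≠ y) : uIcc x y = Icc 0 1 := by
  rcases hx with rfl | rfl <;> rcases hy with rfl | rfl <;> simp_all

section CutCrossing

variable {X ι : Type*} [TopologicalSpace X] {F : ℝ → X} {g : ℝ → ℝ} {e : ι → ℝ → X}

/-- `F` parametrizes an arc on `[0,1]`, the open edges `e i '' Ioo 0 1` form a cut of `X`, and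
the height `g` along the arc lies in `(0,1)` only on these edges, where it is the edge
parameter. -/
structure IsCutCrossing (F : ℝ → X) (g : ℝ → ℝ) (e : ι → ℝ → X) : Prop where
  continuous : Continuous F
  injOn : InjOn F (Icc 0 1)
  continuous_height : Continuous g
  height_mem : ∀ s, g s ∈ Icc (0 : ℝ) 1
  continuous_edge : ∀ i, Continuous (e i)
  exists_edge : ∀ s, g s ∈ Ioo (0 : ℝ) 1 → ∃ i, F s = e i (g s)
  edge_injective : ∀ i j r, r ∈ Ioo (0 : ℝ) 1 → e i r = e j r → i = j
  height_edge : ∀ s i r, F s = e i r → g s = r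

def LeavesThrough (g : ℝ → ℝ) (u ε : ℝ) : Prop :=
  ∃ d, u < d ∧ d ≤ 1 ∧ (∀ s ∈ Ico u d, g s ∈ Ioo (0 : ℝ) 1) ∧ g d = ε

def EntersThrough (g : ℝ → ℝ) (v ε : ℝ) : Prop :=
  ∃ c, 0 ≤ c ∧ c < v ∧ (∀ s ∈ Ioc c v, g s ∈ Ioo (0 : ℝ) 1) ∧ g c = ε

namespace IsCutCrossing

theorem height_mem_pair (hF : IsCutCrossing F g e) {s : ℝ} (hs : g s ∉ Ioo (0 : ℝ) 1) :
    g s ∈ ({0, 1} : Set ℝ) := by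
  rw [← Icc_sdiff_Ioo_same zero_le_one]
  exact ⟨hF.height_mem s, hs⟩

theorem isClosed_setOf_height_notMem (hF : IsCutCrossing F g e) :
    IsClosed {s | g s ∉ Ioo (0 : ℝ) 1} :=
  (isOpen_Ioo.preimage hF.continuous_height).isClosed_compl

theorem eq_of_eq_edge (hF : IsCutCrossing F g e) {s r : ℝ} (hr : r ∈ Ioo (0 : ℝ) 1) {i k : ι}
    (hi : F s = e i r) (hk : F s = e k (g s)) : k = i := by
  rw [hF.height_edge s i r hi] at hk
  exact hF.edge_injective k i r hr (hk.symm.trans hi)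

/-- The sets where `F` follows a given edge are closed and, the open edges being disjoint,
disjoint over the interval; by connectedness one of them contains it. -/
theorem exists_edge_of_Ioo [T2Space X] [Finite ι] (hF : IsCutCrossing F g e) {p q : ℝ}
    (hpq : p < q) (hU : ∀ s ∈ Ioo p q, g s ∈ Ioo (0 : ℝ) 1) :
    ∃ k, ∀ s ∈ Icc p q, F s = e k (g s) := by
  let C : ι → Set ℝ := fun j => {s | F s = e j (g s)}
  have hC : ∀ j, IsClosed (C j) := fun j =>
    isClosed_eq hF.continuous ((hF.continuous_edge j).comp hF.continuous_height)
  obtain ⟨s₀, hs₀⟩ := exists_between hpq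
  obtain ⟨k, hk⟩ := hF.exists_edge s₀ (hU s₀ hs₀)
  have hsame : ∀ s ∈ Ioo p q, ∀ j, s ∈ C j → s ∈ C k → j = k := fun s hs j hj hk =>
    hF.edge_injective j k (g s) (hU s hs) (hj.symm.trans hk)
  have hsplit := isPreconnected_iff_subset_of_disjoint_closed.1 isPreconnected_Ioo (C k)
    (⋃ j ∈ ({k}ᶜ : Set ι), C j) (hC k) ((toFinite _).isClosed_biUnion fun j _ => hC j)
    (fun s hs => by
      obtain ⟨j, hj⟩ := hF.exists_edge s (hU s hs)
      by_cases hjk : j = k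
      · exact Or.inl (hjk ▸ hj)
      · exact Or.inr (mem_biUnion hjk hj))
    (eq_empty_of_forall_notMem fun s hs => by
      obtain ⟨hs, hsk, hsj⟩ := hs
      obtain ⟨j, hjk, hj⟩ := mem_iUnion₂.1 hsj
      exact hjk (hsame s hs j hj hsk))
  obtain hsub | hsub := hsplit
  · refine ⟨k, fun s hs => ?_⟩
    rw [← closure_Ioo hpq.ne] at hs
    exact (hC k).closure_subset_iff.2 hsub hs
  · obtain ⟨j, hjk, hj⟩ := mem_iUnion₂.1 (hsub hs₀)
    exact absurd (hsame s₀ hs₀ j hj hk) hjk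

theorem height_ne [T2Space X] [Finite ι] (hF : IsCutCrossing F g e) {c d : ℝ} (hcd : c < d)
    (hc : 0 ≤ c) (hd : d ≤ 1) (hU : ∀ s ∈ Ioo c d, g s ∈ Ioo (0 : ℝ) 1) : g c ≠ g d := by
  obtain ⟨k, hk⟩ := hF.exists_edge_of_Ioo hcd hU
  intro h
  refine hcd.ne (hF.injOn ⟨hc, hcd.le.trans hd⟩ ⟨hc.trans hcd.le, hd⟩ ?_)
  rw [hk c (left_mem_Icc.2 hcd.le), hk d (right_mem_Icc.2 hcd.le), h]

theorem covers_of_eqOn (hF : IsCutCrossing F g e) {p q : ℝ} (hpq : p ≤ q) {k : ι}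
    (hk : ∀ s ∈ Icc p q, F s = e k (g s)) :
    ∀ r ∈ uIcc (g p) (g q), ∃ s ∈ Icc p q, F s = e k r := by
  intro r hr
  obtain ⟨s, hs, rfl⟩ := intermediate_value_uIcc hF.continuous_height.continuousOn hr
  rw [uIcc_of_le hpq] at hs
  exact ⟨s, hs, hk s hs⟩

/-- A piece of the arc from one side of the cut to the other traverses some edge completely,
so it passes through the marked point of that edge. -/
theorem exists_visit_of_height_ne [T2Space X] [Finite ι] (hF : IsCutCrossing F g e)
    {t : ι → ℝ} (ht : ∀ i, t i ∈ Ioo (0 : ℝ) 1) {c d : ℝ} (hcd : c ≤ d) (hc : 0 ≤ c)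
    (hd : d ≤ 1) (hgc : g c ∉ Ioo (0 : ℝ) 1) (hgd : g d ∉ Ioo (0 : ℝ) 1) (hne : g c ≠ g d) :
    ∃ s ∈ Ioo c d, ∃ k, F s = e k (t k) := by
  have hT := hF.isClosed_setOf_height_notMem
  obtain ⟨m, hm, hgm⟩ : (1 / 2 : ℝ) ∈ g '' uIcc c d := by
    refine intermediate_value_uIcc hF.continuous_height.continuousOn ?_
    rw [uIcc_eq_Icc_of_mem_pair (hF.height_mem_pair hgc) (hF.height_mem_pair hgd) hne]
    norm_num
  rw [uIcc_of_le hcd] at hm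
  have hmT : g m ∈ Ioo (0 : ℝ) 1 := by rw [hgm]; norm_num
  obtain ⟨c', hc'T, hcc', hc'm, hc'U⟩ := exists_last_mem_of_isClosed hT (not_not.2 hmT) hgc hm.1
  obtain ⟨d', hd'T, hmd', hd'd, hd'U⟩ := exists_first_mem_of_isClosed hT (not_not.2 hmT) hgd hm.2
  have hU : ∀ s ∈ Ioo c' d', g s ∈ Ioo (0 : ℝ) 1 := fun s hs => by
    rcases le_or_gt s m with h | h
    exacts [not_not.1 (hc'U s ⟨hs.1, h⟩), not_not.1 (hd'U s ⟨h.le, hs.2⟩)]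
  have hcd' : c' < d' := hc'm.trans hmd'
  obtain ⟨k, hk⟩ := hF.exists_edge_of_Ioo hcd' hU
  obtain ⟨s, hs, hFs⟩ := hF.covers_of_eqOn hcd'.le hk (t k) (by
    rw [uIcc_eq_Icc_of_mem_pair (hF.height_mem_pair hc'T) (hF.height_mem_pair hd'T)
      (hF.height_ne hcd' (hc.trans hcc') (hd'd.trans hd) hU)]
    exact Ioo_subset_Icc_self (ht k))
  have hsT : s ∉ {s | g s ∉ Ioo (0 : ℝ) 1} := not_not.2 (hF.height_edge s k _ hFs ▸ ht k)
  refine ⟨s, ⟨hcc'.trans_lt (hs.1.lt_of_ne (ne_of_mem_of_not_mem hc'T hsT)),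
    (hs.2.lt_of_ne (ne_of_mem_of_not_mem hd'T hsT).symm).trans_le hd'd⟩, k, hFs⟩

/-- Between two consecutive visits of marked points the arc crosses no edge, so it enters the
second edge from the side of the cut through which it left the first. -/
theorem exists_side_of_consecutive [T2Space X] [Finite ι] (hF : IsCutCrossing F g e)
    {t : ι → ℝ} (ht : ∀ i, t i ∈ Ioo (0 : ℝ) 1) {u v : ℝ} (huv : u < v) (hu : 0 ≤ u)
    (hv : v ≤ 1) {i j : ι} (hij : i ≠ j) (hFu : F u = e i (t i)) (hFv : F v = e j (t j))
    (hno : ∀ s ∈ Ioo u v, ∀ k, F s ≠ e k (t k)) :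
    ∃ ε ∈ ({0, 1} : Set ℝ), LeavesThrough g u ε ∧ EntersThrough g v ε := by
  have hT := hF.isClosed_setOf_height_notMem
  have hgu : g u ∈ Ioo (0 : ℝ) 1 := hF.height_edge u i _ hFu ▸ ht i
  have hgv : g v ∈ Ioo (0 : ℝ) 1 := hF.height_edge v j _ hFv ▸ ht j
  obtain ⟨m, hm, hmT⟩ : ∃ m ∈ Icc u v, g m ∉ Ioo (0 : ℝ) 1 := by
    by_contra! hU
    obtain ⟨k, hk⟩ := hF.exists_edge_of_Ioo huv fun s hs => hU s (Ioo_subset_Icc_self hs)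
    have hki := hF.eq_of_eq_edge (ht i) hFu (hk u (left_mem_Icc.2 huv.le))
    have hkj := hF.eq_of_eq_edge (ht j) hFv (hk v (right_mem_Icc.2 huv.le))
    exact hij (hki.symm.trans hkj)
  obtain ⟨d, hdT, hud, hdm, hdU⟩ := exists_first_mem_of_isClosed hT (not_not.2 hgu) hmT hm.1
  obtain ⟨c, hcT, hmc, hcv, hcU⟩ := exists_last_mem_of_isClosed hT (not_not.2 hgv) hmT hm.2
  have hdc : g d = g c := by
    by_contra hne
    obtain ⟨s, hs, k, hFs⟩ := hF.exists_visit_of_height_ne ht (hdm.trans hmc)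
      (hu.trans hud.le) (hcv.le.trans hv) hdT hcT hne
    exact hno s ⟨hud.trans hs.1, hs.2.trans hcv⟩ k hFs
  exact ⟨g d, hF.height_mem_pair hdT,
    ⟨d, hud, hdm.trans (hmc.trans hcv.le) |>.trans hv, fun s hs => not_not.1 (hdU s hs), rfl⟩,
    ⟨c, hu.trans (hud.le.trans (hdm.trans hmc)), hcv, fun s hs => not_not.1 (hcU s hs),
      hdc.symm⟩⟩

theorem ne_of_entersThrough_of_leavesThrough [T2Space X] [Finite ι] (hF : IsCutCrossing F g e)
    {v ε ε' : ℝ} (hin : EntersThrough g v ε) (hout : LeavesThrough g v ε') : ε ≠ ε' := by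
  obtain ⟨c, hc, hcv, hcU, rfl⟩ := hin
  obtain ⟨d, hvd, hd, hdU, rfl⟩ := hout
  refine hF.height_ne (hcv.trans hvd) hc hd fun s hs => ?_
  rcases le_or_gt s v with h | h
  exacts [hcU s ⟨hs.1, h⟩, hdU s ⟨h.le, hs.2⟩]

theorem covers_of_leavesThrough [T2Space X] [Finite ι] (hF : IsCutCrossing F g e)
    {u r₀ ε : ℝ} (hu : 0 ≤ u) (hr₀ : r₀ ∈ Ioo (0 : ℝ) 1) {i : ι} (hFu : F u = e i r₀)
    (hout : LeavesThrough g u ε) : ∀ r ∈ uIcc r₀ ε, ∃ s ∈ Icc (0 : ℝ) 1, F s = e i r := by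
  obtain ⟨d, hud, hd, hdU, rfl⟩ := hout
  obtain ⟨k, hk⟩ := hF.exists_edge_of_Ioo hud fun s hs => hdU s ⟨hs.1.le, hs.2⟩
  obtain rfl := hF.eq_of_eq_edge hr₀ hFu (hk u (left_mem_Icc.2 hud.le))
  intro r hr
  rw [← hF.height_edge u k r₀ hFu] at hr
  obtain ⟨s, hs, hFs⟩ := hF.covers_of_eqOn hud.le hk r hr
  exact ⟨s, Icc_subset_Icc hu hd hs, hFs⟩

theorem covers_of_entersThrough [T2Space X] [Finite ι] (hF : IsCutCrossing F g e)
    {v r₀ ε : ℝ} (hv : v ≤ 1) (hr₀ : r₀ ∈ Ioo (0 : ℝ) 1) {i : ι} (hFv : F v = e i r₀)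
    (hin : EntersThrough g v ε) : ∀ r ∈ uIcc r₀ ε, ∃ s ∈ Icc (0 : ℝ) 1, F s = e i r := by
  obtain ⟨c, hc, hcv, hcU, rfl⟩ := hin
  obtain ⟨k, hk⟩ := hF.exists_edge_of_Ioo hcv fun s hs => hcU s ⟨hs.1, hs.2.le⟩
  obtain rfl := hF.eq_of_eq_edge hr₀ hFv (hk v (right_mem_Icc.2 hcv.le))
  intro r hr
  rw [← hF.height_edge v k r₀ hFv, uIcc_comm] at hr
  obtain ⟨s, hs, hFs⟩ := hF.covers_of_eqOn hcv.le hk r hr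
  exact ⟨s, Icc_subset_Icc hc hv hs, hFs⟩

theorem sides_alternate [T2Space X] [Finite ι] (hF : IsCutCrossing F g e) {N : ℕ}
    (u : Fin N → ℝ) (hgap : ∀ k (hk : k + 1 < N), ∃ ε ∈ ({0, 1} : Set ℝ),
      LeavesThrough g (u ⟨k, by omega⟩) ε ∧ EntersThrough g (u ⟨k + 1, hk⟩) ε) :
    ∀ k (hk : k + 1 < N), ∃ ε₀ ∈ ({0, 1} : Set ℝ), ∃ ε ∈ ({0, 1} : Set ℝ),
      LeavesThrough g (u ⟨0, by omega⟩) ε₀ ∧ EntersThrough g (u ⟨k + 1, hk⟩) ε ∧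
        (ε = ε₀ ↔ Even k) := by
  intro k
  induction k with
  | zero =>
    intro hk
    obtain ⟨ε, hε, hout, hin⟩ := hgap 0 hk
    exact ⟨ε, hε, ε, hε, hout, hin, by simp⟩
  | succ k ih =>
    intro hk
    obtain ⟨ε₀, hε₀, ε, hε, hout₀, hin, hpar⟩ := ih (by omega)
    obtain ⟨ε', hε', hout, hin'⟩ := hgap (k + 1) hk
    have hturn := hF.ne_of_entersThrough_of_leavesThrough hin hout
    refine ⟨ε₀, hε₀, ε', hε', hout₀, hin', ?_⟩
    rw [Nat.even_add_one, ← hpar]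
    rcases hε₀ with rfl | rfl <;> rcases hε with rfl | rfl <;> rcases hε' with rfl | rfl <;>
      simp_all

theorem exists_sorted_visits [Fintype ι] (hF : IsCutCrossing F g e) {t : ι → ℝ}
    (ht : ∀ i, t i ∈ Ioo (0 : ℝ) 1) (hvisit : ∀ i, ∃ s ∈ Icc (0 : ℝ) 1, F s = e i (t i))
    {i₀ i₁ : ι} (h0 : F 0 = e i₀ (t i₀)) (h1 : F 1 = e i₁ (t i₁)) (hN : 0 < Fintype.card ι) :
    ∃ u : Fin (Fintype.card ι) → ℝ, StrictMono u ∧ u ⟨0, hN⟩ = 0 ∧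
      u ⟨Fintype.card ι - 1, by omega⟩ = 1 ∧ (∀ k, u k ∈ Icc (0 : ℝ) 1 ∧ ∃ i, F (u k) = e i (t i)) ∧
      ∀ k (hk : k + 1 < Fintype.card ι), ∀ s ∈ Ioo (u ⟨k, by omega⟩) (u ⟨k + 1, hk⟩),
        ∀ i, F s ≠ e i (t i) := by
  classical
  choose S hS hFS using hvisit
  have htime : ∀ s ∈ Icc (0 : ℝ) 1, ∀ i, F s = e i (t i) → S i = s := fun s hs i h =>
    hF.injOn (hS i) hs ((hFS i).trans h.symm)
  have hSinj : Injective S := fun i j h => by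
    have htij : t i = t j := by
      rw [← hF.height_edge _ _ _ (hFS i), ← hF.height_edge _ _ _ (hFS j), h]
    refine hF.edge_injective i j (t i) (ht i) ?_
    rw [← hFS i, h, hFS j, htij]
  set Z := Finset.univ.image S
  have hZ : Z.card = Fintype.card ι := Finset.card_image_of_injective _ hSinj
  have hZsub : ∀ x ∈ Z, x ∈ Icc (0 : ℝ) 1 := by simpa [Z] using hS
  have h0Z : (0 : ℝ) ∈ Z := Finset.mem_image.2 ⟨i₀, Finset.mem_univ _, htime 0 (by simp) i₀ h0⟩
  have h1Z : (1 : ℝ) ∈ Z := Finset.mem_image.2 ⟨i₁, Finset.mem_univ _, htime 1 (by simp) i₁ h1⟩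
  set u := Z.orderEmbOfFin hZ
  have hmem : ∀ k, u k ∈ Icc (0 : ℝ) 1 ∧ ∃ i, F (u k) = e i (t i) := fun k => by
    obtain ⟨i, -, hi⟩ := Finset.mem_image.1 (Z.orderEmbOfFin_mem hZ k)
    exact ⟨hZsub _ (Z.orderEmbOfFin_mem hZ k), i, hi ▸ hFS i⟩
  refine ⟨u, u.strictMono, ?_, ?_, hmem, fun k hk s hs i hFs => ?_⟩
  · rw [Finset.orderEmbOfFin_zero hZ hN]
    exact le_antisymm (Z.min'_le _ h0Z) (hZsub _ (Z.min'_mem _)).1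
  · rw [Finset.orderEmbOfFin_last hZ hN]
    exact le_antisymm (hZsub _ (Z.max'_mem _)).2 (Z.le_max' _ h1Z)
  · have hs01 : s ∈ Icc (0 : ℝ) 1 := ⟨(hmem _).1.1.trans hs.1.le, hs.2.le.trans (hmem _).1.2⟩
    obtain ⟨m, hm⟩ : s ∈ range u := by
      rw [Finset.range_orderEmbOfFin]
      exact Finset.mem_image.2 ⟨i, Finset.mem_univ _, htime s hs01 i hFs⟩
    rw [← hm] at hs
    have hkm := Fin.lt_def.1 (u.lt_iff_lt.1 hs.1)
    have hmk := Fin.lt_def.1 (u.lt_iff_lt.1 hs.2)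
    simp only at hkm hmk
    omega

theorem exists_sides [T2Space X] [Fintype ι] (hF : IsCutCrossing F g e) {t : ι → ℝ}
    (ht : ∀ i, t i ∈ Ioo (0 : ℝ) 1) (hvisit : ∀ i, ∃ s ∈ Icc (0 : ℝ) 1, F s = e i (t i))
    {i₀ i₁ : ι} (h0 : F 0 = e i₀ (t i₀)) (h1 : F 1 = e i₁ (t i₁)) :
    ∃ ε₀ ∈ ({0, 1} : Set ℝ), ∃ ε₁ ∈ ({0, 1} : Set ℝ),
      (∀ r ∈ uIcc (t i₀) ε₀, ∃ s ∈ Icc (0 : ℝ) 1, F s = e i₀ r) ∧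
      (∀ r ∈ uIcc (t i₁) ε₁, ∃ s ∈ Icc (0 : ℝ) 1, F s = e i₁ r) ∧
      (ε₁ = ε₀ ↔ Even (Fintype.card ι)) := by
  have hi : i₀ ≠ i₁ := by
    rintro rfl
    exact zero_ne_one (hF.injOn (left_mem_Icc.2 zero_le_one) (right_mem_Icc.2 zero_le_one)
      (h0.trans h1.symm))
  have hN : 1 < Fintype.card ι := Fintype.one_lt_card_iff.2 ⟨i₀, i₁, hi⟩
  obtain ⟨u, hu, hu0, hu1, hmem, hno⟩ := hF.exists_sorted_visits ht hvisit h0 h1 (by omega)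
  have hgap : ∀ k (hk : k + 1 < Fintype.card ι), ∃ ε ∈ ({0, 1} : Set ℝ),
      LeavesThrough g (u ⟨k, by omega⟩) ε ∧ EntersThrough g (u ⟨k + 1, hk⟩) ε := by
    intro k hk
    obtain ⟨i, hi⟩ := (hmem ⟨k, by omega⟩).2
    obtain ⟨j, hj⟩ := (hmem ⟨k + 1, hk⟩).2
    have hlt := hu (show (⟨k, by omega⟩ : Fin _) < ⟨k + 1, hk⟩ from Fin.mk_lt_mk.2 k.lt_succ_self)
    refine hF.exists_side_of_consecutive ht hlt (hmem _).1.1 (hmem _).1.2 ?_ hi hj (hno k hk)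
    rintro rfl
    exact hlt.ne (hF.injOn (hmem _).1 (hmem _).1 (hi.trans hj.symm))
  obtain ⟨ε₀, hε₀, ε₁, hε₁, hout, hin, hpar⟩ :=
    hF.sides_alternate u hgap (Fintype.card ι - 2) (by omega)
  have hlast : u ⟨Fintype.card ι - 2 + 1, by omega⟩ = 1 := by
    rw [← hu1]
    congr 2
    omega
  rw [hu0] at hout
  rw [hlast] at hin
  refine ⟨ε₀, hε₀, ε₁, hε₁, hF.covers_of_leavesThrough le_rfl (ht i₀) h0 hout,
    hF.covers_of_entersThrough le_rfl (ht i₁) h1 hin, ?_⟩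
  rw [hpar, Nat.even_sub (by omega)]
  simp

end IsCutCrossing

end CutCrossing

section GraphRealization

open Classical

variable {V : Type*}

theorem edgePoint_zero (v w : V) : edgePoint v w 0 = vertexPoint v := by
  funext u
  simp [edgePoint, vertexPoint]

theorem edgePoint_flip (v w : V) (r : ℝ) : edgePoint v w r = edgePoint w v (1 - r) := by
  funext u
  simp only [edgePoint]
  split_ifs <;> ring

theorem continuous_edgePoint (v w : V) : Continuous (edgePoint v w) := by
  refine continuous_pi fun u => ?_
  simp only [edgePoint]
  split_ifs <;> fun_prop

theorem edgePoint_nonneg {v w : V} {r : ℝ} (hr : r ∈ Icc (0 : ℝ) 1) (u : V) :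
    0 ≤ edgePoint v w r u := by
  simp only [edgePoint]
  split_ifs <;> linarith [hr.1, hr.2]

theorem hasSum_edgePoint (v w : V) (r : ℝ) : HasSum (edgePoint v w r) 1 := by
  have := (hasSum_ite_eq v (1 - r)).add (hasSum_ite_eq w r)
  rwa [sub_add_cancel] at this

theorem eq_of_edgePoint_eq {v w v' w' : V} {r : ℝ} (hr : r ∈ Ioo (0 : ℝ) 1) (hvw : v ≠ w)
    (hvw' : v ≠ w') (hwv' : w ≠ v') (h : edgePoint v w r = edgePoint v' w' r) :
    v = v' ∧ w = w' := by
  have hv := congrFun h v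
  have hw := congrFun h w
  refine ⟨by_contra fun h' => ?_, by_contra fun h' => ?_⟩
  · simp [edgePoint, hvw, hvw', h'] at hv
    linarith [hr.2]
  · simp [edgePoint, hvw.symm, hwv', h'] at hw
    linarith [hr.1]

noncomputable def massOn (B : Set V) (x : V → ℝ) : ℝ := ∑' v, B.indicator x v

theorem massOn_edgePoint (B : Set V) (v w : V) (r : ℝ) :
    massOn B (edgePoint v w r) = (if v ∈ B then 1 - r else 0) + (if w ∈ B then r else 0) := by
  refine HasSum.tsum_eq ?_
  convert (hasSum_ite_eq v (if v ∈ B then 1 - r else 0)).add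
    (hasSum_ite_eq w (if w ∈ B then r else 0)) using 1
  funext u
  simp only [Set.indicator, edgePoint]
  split_ifs <;> simp_all

/-- On `P`, `∑ v ∈ S, B.indicator x v ≤ massOn B x ≤ 1 - ∑ v ∈ S, Bᶜ.indicator x v`, and the two
continuous bounds agree at `p`. -/
theorem continuousWithinAt_massOn (B : Set V) {P : Set (V → ℝ)}
    (hP : ∀ x ∈ P, (∀ v, 0 ≤ x v) ∧ HasSum x 1) {p : V → ℝ} (hp : p ∈ P) (S : Finset V)
    (hS : ∀ v ∉ S, p v = 0) : ContinuousWithinAt (massOn B) P p := by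
  have hcont : ∀ (C : Set V) v, Continuous fun x : V → ℝ => C.indicator x v := fun C v => by
    by_cases hv : v ∈ C <;> simp only [Set.indicator, hv, if_true, if_false] <;> fun_prop
  let lower := fun x : V → ℝ => ∑ v ∈ S, B.indicator x v
  let upper := fun x : V → ℝ => 1 - ∑ v ∈ S, Bᶜ.indicator x v
  have hbounds : ∀ x ∈ P, lower x ≤ massOn B x ∧ massOn B x ≤ upper x := fun x hx => by
    obtain ⟨hx0, hx1⟩ := hP x hx
    have hnn : ∀ (C : Set V) v, 0 ≤ C.indicator x v := fun C v =>
      Set.indicator_nonneg (fun v _ => hx0 v) v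
    have htot : massOn B x + ∑' v, Bᶜ.indicator x v = 1 := by
      refine ((hx1.summable.indicator B).hasSum.add (hx1.summable.indicator Bᶜ).hasSum).unique ?_
      simpa only [Set.indicator_self_add_compl_apply] using hx1
    have := (hx1.summable.indicator Bᶜ).sum_le_tsum S fun v _ => hnn Bᶜ v
    exact ⟨(hx1.summable.indicator B).sum_le_tsum S fun v _ => hnn B v,
      by simp only [upper]; linarith⟩
  have hlu : lower p = upper p := by
    have hsum := (hasSum_sum_of_ne_finset_zero hS).unique (hP p hp).2
    simp only [lower, upper, eq_sub_iff_add_eq, ← Finset.sum_add_distrib,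
      Set.indicator_self_add_compl_apply, hsum]
  have hmass : massOn B p = lower p :=
    le_antisymm (hlu ▸ (hbounds p hp).2) (hbounds p hp).1
  refine tendsto_of_tendsto_of_tendsto_of_le_of_le' ?_ ?_
    (eventually_nhdsWithin_of_forall fun x hx => (hbounds x hx).1)
    (eventually_nhdsWithin_of_forall fun x hx => (hbounds x hx).2)
  · rw [hmass]
    exact (continuous_finsetSum _ fun v _ => hcont B v).continuousWithinAt
  · rw [hmass, hlu]
    exact (continuous_const.sub (continuous_finsetSum _ fun v _ => hcont Bᶜ v)).continuousWithinAt

variable {G : SimpleGraph V}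

theorem exists_edgePoint_of_mem {x : V → ℝ} (hx : x ∈ GraphRealization G) :
    ∃ v w r, r ∈ Icc (0 : ℝ) 1 ∧ x = edgePoint v w r := by
  rcases hx with ⟨v, rfl⟩ | ⟨v, w, r, -, hr, rfl⟩
  exacts [⟨v, v, 0, left_mem_Icc.2 zero_le_one, (edgePoint_zero v v).symm⟩, ⟨v, w, r, hr, rfl⟩]

theorem continuousOn_massOn (G : SimpleGraph V) (B : Set V) :
    ContinuousOn (massOn B) (GraphRealization G) := by
  intro x hx
  obtain ⟨v, w, r, -, rfl⟩ := exists_edgePoint_of_mem hx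
  refine continuousWithinAt_massOn B (fun y hy => ?_) hx {v, w} fun u hu => ?_
  · obtain ⟨v', w', r', hr', rfl⟩ := exists_edgePoint_of_mem hy
    exact ⟨edgePoint_nonneg hr', hasSum_edgePoint v' w' r'⟩
  · simp only [Finset.mem_insert, Finset.mem_singleton, not_or] at hu
    simp [edgePoint, hu.1, hu.2]

theorem massOn_mem_Icc (B : Set V) {x : V → ℝ} (hx : x ∈ GraphRealization G) :
    massOn B x ∈ Icc (0 : ℝ) 1 := by
  obtain ⟨v, w, r, hr, rfl⟩ := exists_edgePoint_of_mem hx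
  rw [massOn_edgePoint]
  constructor <;> split_ifs <;> linarith [hr.1, hr.2]

theorem exists_cutEdge_of_massOn_mem_Ioo {B : Set V} {ι : Type*} {a b : ι → V}
    (hcut : ∀ v w, G.Adj v w → v ∉ B → w ∈ B → ∃ i, v = a i ∧ w = b i) {x : V → ℝ}
    (hx : x ∈ GraphRealization G) (h : massOn B x ∈ Ioo (0 : ℝ) 1) :
    ∃ i, x = edgePoint (a i) (b i) (massOn B x) := by
  rcases hx with ⟨v, rfl⟩ | ⟨v, w, r, hvw, -, rfl⟩
  · rw [← edgePoint_zero v v, massOn_edgePoint] at h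
    split_ifs at h <;> norm_num at h
  · rw [massOn_edgePoint] at h ⊢
    by_cases hv : v ∈ B <;> by_cases hw : w ∈ B <;> simp only [hv, hw, if_true, if_false] at h ⊢
    · norm_num at h
    · obtain ⟨i, rfl, rfl⟩ := hcut w v hvw.symm hw hv
      exact ⟨i, by rw [add_zero, edgePoint_flip]⟩
    · obtain ⟨i, rfl, rfl⟩ := hcut v w hvw hv hw
      exact ⟨i, by rw [zero_add]⟩
    · norm_num at h

theorem isCutCrossing_of_isEmbedding {B : Set V} {ι : Type*} {a b : ι → V}
    (ha : ∀ i, a i ∉ B) (hb : ∀ i, b i ∈ B)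
    (hdistinct : ∀ i j, s(a i, b i) = s(a j, b j) → i = j)
    (hcut : ∀ v w, G.Adj v w → v ∉ B → w ∈ B → ∃ i, v = a i ∧ w = b i)
    {f : unitInterval → GraphRealization G} (hf : IsEmbedding f) :
    IsCutCrossing (IccExtend zero_le_one (Subtype.val ∘ f))
      (massOn B ∘ IccExtend zero_le_one (Subtype.val ∘ f)) fun i => edgePoint (a i) (b i) where
  continuous := (continuous_subtype_val.comp hf.continuous).Icc_extend'
  injOn x hx y hy h := by
    rw [IccExtend_of_mem _ _ hx, IccExtend_of_mem _ _ hy] at h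
    exact congrArg Subtype.val (hf.injective (Subtype.ext h))
  continuous_height := (continuousOn_massOn G B).comp_continuous
    (continuous_subtype_val.comp hf.continuous).Icc_extend' fun _ => (f _).2
  height_mem _ := massOn_mem_Icc B (f _).2
  continuous_edge _ := continuous_edgePoint _ _
  exists_edge _ := exists_cutEdge_of_massOn_mem_Ioo hcut (f _).2
  edge_injective i j r hr h := by
    have hab : ∀ i j, a i ≠ b j := fun i j hij => ha i (hij ▸ hb j)
    obtain ⟨h₁, h₂⟩ := eq_of_edgePoint_eq hr (hab i i) (hab i j) (hab j i).symm h
    exact hdistinct i j (by rw [h₁, h₂])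
  height_edge s i r h := by
    rw [comp_apply, h, massOn_edgePoint, if_neg (ha i), if_pos (hb i), zero_add]

theorem arcContainsSeg_of_forall_uIcc {f : unitInterval → GraphRealization G} {v w : V}
    {r₀ r₁ : ℝ} (h : ∀ r ∈ uIcc r₀ r₁, ∃ s ∈ Icc (0 : ℝ) 1,
      IccExtend zero_le_one (Subtype.val ∘ f) s = edgePoint v w r) :
    ArcContainsSeg f v w r₀ r₁ ∧ ArcContainsSeg f v w r₁ r₀ := by
  have key : ∀ r ∈ uIcc r₀ r₁, ∃ s, (f s : V → ℝ) = edgePoint v w r := fun r hr => by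
    obtain ⟨s, -, hs⟩ := h r hr
    exact ⟨_, hs⟩
  exact ⟨fun r hr => key r (Icc_subset_uIcc hr), fun r hr => key r (Icc_subset_uIcc' hr)⟩

end GraphRealization

/-- Let `E(A,B) = {a₁b₁, …, aₙbₙ}` be an edge cut of `G` and `xᵢ` interior
points of the edges `aᵢbᵢ`. Any arc containing all the `xᵢ` with endpoints `x₁` and `xₙ`
contains both `[a₁,x₁]` and `[aₙ,xₙ]`, or both `[x₁,b₁]` and `[xₙ,bₙ]`, if `n` is even;
and it contains `[a₁,x₁]` and `[xₙ,bₙ]`, or `[x₁,b₁]` and `[aₙ,xₙ]`, if `n` is odd. -/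
theorem statement3 {V : Type*} (G : SimpleGraph V) (A B : Set V)
    (hcover : A ∪ B = Set.univ) (hdisj : Disjoint A B)
    (n : ℕ) (hn : 0 < n) (a b : Fin n → V) (t : Fin n → ℝ)
    (ha : ∀ i, a i ∈ A) (hb : ∀ i, b i ∈ B)
    (hdistinct : ∀ i j : Fin n, s(a i, b i) = s(a j, b j) → i = j)
    (hcut : ∀ v w : V, G.Adj v w → v ∈ A → w ∈ B → ∃ i, v = a i ∧ w = b i)
    (ht : ∀ i, t i ∈ Set.Ioo (0 : ℝ) 1)
    (f : ↥unitInterval → ↥(GraphRealization G)) (hf : Topology.IsEmbedding f)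
    (h0 : (f 0 : V → ℝ) = edgePoint (a ⟨0, hn⟩) (b ⟨0, hn⟩) (t ⟨0, hn⟩))
    (h1 : (f 1 : V → ℝ) =
      edgePoint (a ⟨n - 1, by omega⟩) (b ⟨n - 1, by omega⟩) (t ⟨n - 1, by omega⟩))
    (hall : ∀ i : Fin n, ∃ s, (f s : V → ℝ) = edgePoint (a i) (b i) (t i)) :
    (Even n →
      (ArcContainsSeg f (a ⟨0, hn⟩) (b ⟨0, hn⟩) 0 (t ⟨0, hn⟩) ∧
        ArcContainsSeg f (a ⟨n - 1, by omega⟩) (b ⟨n - 1, by omega⟩) 0 (t ⟨n - 1, by omega⟩)) ∨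
      (ArcContainsSeg f (a ⟨0, hn⟩) (b ⟨0, hn⟩) (t ⟨0, hn⟩) 1 ∧
        ArcContainsSeg f (a ⟨n - 1, by omega⟩) (b ⟨n - 1, by omega⟩) (t ⟨n - 1, by omega⟩) 1)) ∧
    (Odd n →
      (ArcContainsSeg f (a ⟨0, hn⟩) (b ⟨0, hn⟩) 0 (t ⟨0, hn⟩) ∧
        ArcContainsSeg f (a ⟨n - 1, by omega⟩) (b ⟨n - 1, by omega⟩) (t ⟨n - 1, by omega⟩) 1) ∨
      (ArcContainsSeg f (a ⟨0, hn⟩) (b ⟨0, hn⟩) (t ⟨0, hn⟩) 1 ∧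
        ArcContainsSeg f (a ⟨n - 1, by omega⟩) (b ⟨n - 1, by omega⟩) 0 (t ⟨n - 1, by omega⟩))) := by
  obtain rfl : A = Bᶜ := IsCompl.eq_compl ⟨hdisj, codisjoint_iff.2 hcover⟩
  have hF := isCutCrossing_of_isEmbedding ha hb hdistinct hcut hf
  have hvisit : ∀ i, ∃ s ∈ Icc (0 : ℝ) 1,
      IccExtend zero_le_one (Subtype.val ∘ f) s = edgePoint (a i) (b i) (t i) := fun i => by
    obtain ⟨s, hs⟩ := hall i
    exact ⟨s, s.2, by rw [IccExtend_val]; exact hs⟩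
  obtain ⟨ε₀, hε₀, ε₁, hε₁, hfirst, hlast, hpar⟩ := hF.exists_sides ht hvisit
    (i₀ := ⟨0, hn⟩) (i₁ := ⟨n - 1, by omega⟩) (by rw [IccExtend_left]; exact h0)
    (by rw [IccExtend_right]; exact h1)
  rw [Fintype.card_fin] at hpar
  replace hfirst := arcContainsSeg_of_forall_uIcc hfirst
  replace hlast := arcContainsSeg_of_forall_uIcc hlast
  rcases hε₀ with rfl | rfl <;> rcases hε₁ with rfl | rfl <;> simp at hpar
  · exact ⟨fun _ => .inl ⟨hfirst.2, hlast.2⟩, fun h => absurd hpar (Nat.not_even_iff_odd.2 h)⟩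
  · exact ⟨fun h => absurd h (Nat.not_even_iff_odd.2 hpar), fun _ => .inl ⟨hfirst.2, hlast.1⟩⟩
  · exact ⟨fun h => absurd h (Nat.not_even_iff_odd.2 hpar), fun _ => .inr ⟨hfirst.1, hlast.2⟩⟩
  · exact ⟨fun _ => .inr ⟨hfirst.1, hlast.1⟩, fun h => absurd hpar (Nat.not_even_iff_odd.2 h)⟩
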